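/- Every graph G in the class 𝒢 on n vertices satisfies α(G) = (n+1)/3; in particular n ≡ 2 (mod 3). -/

import Mathlib

open SimpleGraph

/-- The independence number of a graph: the largest size of a set of pairwise
non-adjacent vertices. -/
noncomputable def alphaNum {V : Type*} (G : SimpleGraph V) : ℕ :=
  sSup {n | ∃ s : Finset V, ((s : Set V).Pairwise fun a b => ¬ G.Adj a b) ∧ s.card = n}

/-- A path `x1 v1 v2 x2` whose interior vertices `v1, v2` have degree two,
suitable for a path–diamond replacement. -/
def IsReplacablePath {U : Type*} (G1 : SimpleGraph U) (x1 v1 v2 x2 : U) : Prop :=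
  [x1, v1, v2, x2].Nodup ∧
  G1.neighborSet v1 = {x1, v2} ∧ G1.neighborSet v2 = {v1, x2}

/-- The result of a path–diamond replacement: delete `v1, v2` and add a new 5-cycle
`u1 z1 z2 u2 w` (encoded as `Fin 5` in this cyclic order) together with the edges
`x1u1`, `x1u2` and `x2w`. -/
def replGraph {U : Type*} (G1 : SimpleGraph U) (x1 v1 v2 x2 : U) :
    SimpleGraph ({u : U // u ≠ v1 ∧ u ≠ v2} ⊕ Fin 5) :=
  SimpleGraph.fromRel fun a b =>
    match a, b with
    | .inl a, .inl b => G1.Adj a.1 b.1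
    | .inl a, .inr i => (a.1 = x1 ∧ (i = 0 ∨ i = 3)) ∨ (a.1 = x2 ∧ i = 4)
    | .inr i, .inr j => (i, j) ∈ [((0 : Fin 5), (1 : Fin 5)), (1, 2), (2, 3), (3, 4), (4, 0)]
    | _, _ => False

/-- The class 𝒢: the path on two vertices, the 5-cycle, and all graphs obtained from
the 5-cycle by repeated path–diamond replacements (all up to isomorphism). -/
inductive InClassG : ∀ {V : Type}, SimpleGraph V → Prop
  | p2 {V : Type} (G : SimpleGraph V) : Nonempty (G ≃g SimpleGraph.pathGraph 2) → InClassG G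
  | c5 {V : Type} (G : SimpleGraph V) : Nonempty (G ≃g SimpleGraph.cycleGraph 5) → InClassG G
  | repl {U V : Type} (G1 : SimpleGraph U) (G : SimpleGraph V) (x1 v1 v2 x2 : U) :
      InClassG G1 → IsReplacablePath G1 x1 v1 v2 x2 →
      Nonempty (G ≃g replGraph G1 x1 v1 v2 x2) → InClassG G

/-!
By induction along the construction. `α(P₂) = 1` and `α(C₅) = 2`, so it suffices that a
path–diamond replacement adds three vertices and raises `α` by exactly one. For `≥`: a maximum
independent set of `G1` contains at most one of the adjacent vertices `v1, v2`; dropping it and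
adding `{u1, z2}`, `{z1, w}` or `{z1}` of the new 5-cycle (chosen to avoid the neighbours `x1, x2`)
gains one vertex. For `≤`: an independent set meets the 5-cycle in at most two vertices; if it meets
it in two, it cannot contain both `x1` and `x2` (only `z1, z2` avoid both, and they are adjacent),
so `v1` or `v2` can be added to its part in `G1`, which then accounts for the extra vertex.
-/

open Finset

namespace SimpleGraph

lemma alphaNum_eq_indepNum {V : Type*} (G : SimpleGraph V) : alphaNum G = G.indepNum := by
  simp only [alphaNum, indepNum, isNIndepSet_iff]

lemma isIndepSet_finset_iff {V : Type*} {G : SimpleGraph V} {s : Finset V} :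
    G.IsIndepSet s ↔ ∀ a ∈ s, ∀ b ∈ s, ¬G.Adj a b :=
  ⟨fun h _ ha _ hb hab => h ha hb hab.ne hab, fun h _ ha _ hb _ => h _ ha _ hb⟩

lemma indepNum_le_of_forall {V : Type*} {G : SimpleGraph V} {k : ℕ}
    (h : ∀ s : Finset V, G.IsIndepSet s → #s ≤ k) : G.indepNum ≤ k := by
  obtain ⟨s, hs⟩ := G.exists_isNIndepSet_indepNum
  exact hs.card_eq ▸ h s hs.isIndepSet

lemma IsIndepSet.insert_of_forall_not_adj {V : Type*} {G : SimpleGraph V} {s : Set V} {a : V}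
    (hs : G.IsIndepSet s) (ha : ∀ b ∈ s, ¬G.Adj a b) : G.IsIndepSet (insert a s) :=
  Set.pairwise_insert.mpr ⟨hs, fun b hb _ => ⟨ha b hb, fun h => ha b hb h.symm⟩⟩

lemma isIndepSet_map_iff {V W : Type*} {H : SimpleGraph W} (f : V ↪ W) {s : Finset V} :
    H.IsIndepSet (s.map f) ↔ (H.comap f).IsIndepSet s := by
  rw [coe_map, IsIndepSet, f.injective.injOn.pairwise_image]
  rfl

lemma isIndepSet_disjSum {α β : Type*} {H : SimpleGraph (α ⊕ β)} {s : Finset α} {t : Finset β} :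
    H.IsIndepSet (s.disjSum t) ↔ (H.comap Sum.inl).IsIndepSet s ∧
      (H.comap Sum.inr).IsIndepSet t ∧ ∀ a ∈ s, ∀ b ∈ t, ¬H.Adj (.inl a) (.inr b) := by
  simp only [isIndepSet_finset_iff, Sum.forall, inl_mem_disjSum, inr_mem_disjSum, comap_adj]
  grind [adj_comm]

lemma Embedding.indepNum_le {V W : Type*} [Finite W] {G : SimpleGraph V} {H : SimpleGraph W}
    (f : G ↪g H) : G.indepNum ≤ H.indepNum := by
  obtain ⟨s, hs⟩ := G.exists_isNIndepSet_indepNum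
  have hmap : H.IsIndepSet (s.map f.toEmbedding) :=
    (isIndepSet_map_iff f.toEmbedding).mpr fun _ ha _ hb hab => by
      simpa using hs.isIndepSet ha hb hab
  simpa [hs.card_eq] using hmap.card_le_indepNum

lemma Iso.indepNum_eq {V W : Type*} [Finite W] {G : SimpleGraph V} {H : SimpleGraph W}
    (e : G ≃g H) : G.indepNum = H.indepNum :=
  have : Finite V := .of_equiv W e.toEquiv.symm
  le_antisymm (Embedding.indepNum_le e.toEmbedding) (Embedding.indepNum_le e.symm.toEmbedding)

lemma indepNum_pathGraph_two : (pathGraph 2).indepNum = 1 := by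
  refine le_antisymm (indepNum_le_of_forall ?_) ?_
  · simp only [isIndepSet_finset_iff, pathGraph_adj]
    decide
  · simpa using (show (pathGraph 2).IsIndepSet ({0} : Finset (Fin 2)) by simp).card_le_indepNum

lemma indepNum_cycleGraph_five : (cycleGraph 5).indepNum = 2 := by
  refine le_antisymm (indepNum_le_of_forall ?_) ?_
  · simp only [isIndepSet_finset_iff]
    decide
  · have : (cycleGraph 5).IsIndepSet ({0, 2} : Finset (Fin 5)) := by
      rw [isIndepSet_finset_iff]; decide
    simpa using this.card_le_indepNum

section PathDiamond

variable {U : Type*} {G1 : SimpleGraph U} {x1 v1 v2 x2 : U}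

lemma IsReplacablePath.adj_left_iff (h : IsReplacablePath G1 x1 v1 v2 x2) {w : U} :
    G1.Adj v1 w ↔ w = x1 ∨ w = v2 := by
  rw [← mem_neighborSet, h.2.1, Set.mem_insert_iff, Set.mem_singleton_iff]

lemma IsReplacablePath.adj_right_iff (h : IsReplacablePath G1 x1 v1 v2 x2) {w : U} :
    G1.Adj v2 w ↔ w = v1 ∨ w = x2 := by
  rw [← mem_neighborSet, h.2.2, Set.mem_insert_iff, Set.mem_singleton_iff]

lemma IsReplacablePath.ne (h : IsReplacablePath G1 x1 v1 v2 x2) : v1 ≠ v2 :=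
  (h.adj_left_iff.mpr (.inr rfl)).ne

lemma IsReplacablePath.exists_isIndepSet_insert [DecidableEq U]
    (h : IsReplacablePath G1 x1 v1 v2 x2) {S : Finset U} (hS : G1.IsIndepSet S) (hv1 : v1 ∉ S) (hv2 : v2 ∉ S) (hx : x1 ∉ S ∨ x2 ∉ S) :
    ∃ v ∉ S, G1.IsIndepSet ↑(insert v S) := by
  rcases hx with hx1 | hx2
  · refine ⟨v1, hv1, ?_⟩
    rw [coe_insert]
    exact hS.insert_of_forall_not_adj fun b hb hadj =>
      (h.adj_left_iff.mp hadj).elim (fun e => hx1 (e ▸ hb)) (fun e => hv2 (e ▸ hb))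
  · refine ⟨v2, hv2, ?_⟩
    rw [coe_insert]
    exact hS.insert_of_forall_not_adj fun b hb hadj =>
      (h.adj_right_iff.mp hadj).elim (fun e => hv1 (e ▸ hb)) (fun e => hx2 (e ▸ hb))

@[simp] lemma replGraph_adj_inl_inr {a : {u : U // u ≠ v1 ∧ u ≠ v2}} {i : Fin 5} :
    (replGraph G1 x1 v1 v2 x2).Adj (.inl a) (.inr i) ↔
      a.1 = x1 ∧ (i = 0 ∨ i = 3) ∨ a.1 = x2 ∧ i = 4 := by
  simp [replGraph]

lemma replGraph_comap_inl :
    (replGraph G1 x1 v1 v2 x2).comap Sum.inl = G1.comap (Function.Embedding.subtype _) := by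
  ext a b
  simp only [replGraph, comap_adj, fromRel_adj, ne_eq, Sum.inl.injEq, Function.Embedding.subtype]
  exact ⟨fun h => h.2.elim id .symm, fun h => ⟨fun hab => h.ne (congrArg Subtype.val hab), .inl h⟩⟩

lemma replGraph_comap_inr : (replGraph G1 x1 v1 v2 x2).comap Sum.inr = cycleGraph 5 := by
  ext i j
  simp only [replGraph, comap_adj, fromRel_adj, ne_eq, Sum.inr.injEq]
  revert i j
  decide

lemma isIndepSet_replGraph_disjSum {s : Finset {u : U // u ≠ v1 ∧ u ≠ v2}} {t : Finset (Fin 5)} :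
    (replGraph G1 x1 v1 v2 x2).IsIndepSet (s.disjSum t) ↔
      G1.IsIndepSet (s.map (Function.Embedding.subtype _)) ∧ (cycleGraph 5).IsIndepSet t ∧
        ∀ a ∈ s, ∀ i ∈ t, ¬(a.1 = x1 ∧ (i = 0 ∨ i = 3) ∨ a.1 = x2 ∧ i = 4) := by
  simp only [isIndepSet_disjSum, replGraph_comap_inl, replGraph_comap_inr, isIndepSet_map_iff,
    replGraph_adj_inl_inr]

lemma card_add_card_le_indepNum_replGraph [Finite U] {S : Finset U} {t : Finset (Fin 5)}
    (hS : G1.IsIndepSet S) (hv1 : v1 ∉ S) (hv2 : v2 ∉ S) (ht : (cycleGraph 5).IsIndepSet t)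
    (hx1 : x1 ∈ S → 0 ∉ t ∧ 3 ∉ t) (hx2 : x2 ∈ S → 4 ∉ t) :
    #S + #t ≤ (replGraph G1 x1 v1 v2 x2).indepNum := by
  classical
  have hmap : (S.subtype fun u => u ≠ v1 ∧ u ≠ v2).map (Function.Embedding.subtype _) = S :=
    subtype_map_of_mem fun u hu => ⟨ne_of_mem_of_not_mem hu hv1, ne_of_mem_of_not_mem hu hv2⟩
  have hT : (replGraph G1 x1 v1 v2 x2).IsIndepSet
      ((S.subtype fun u => u ≠ v1 ∧ u ≠ v2).disjSum t) := by
    rw [isIndepSet_replGraph_disjSum, hmap]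
    refine ⟨hS, ht, fun a ha i hi hadj => ?_⟩
    rw [mem_subtype] at ha
    rcases hadj with ⟨rfl, rfl | rfl⟩ | ⟨rfl, rfl⟩
    exacts [(hx1 ha).1 hi, (hx1 ha).2 hi, hx2 ha hi]
  have := hT.card_le_indepNum
  rwa [card_disjSum, ← card_map (Function.Embedding.subtype _), hmap] at this

lemma IsReplacablePath.le_indepNum_replGraph [Finite U] (h : IsReplacablePath G1 x1 v1 v2 x2) :
    G1.indepNum + 1 ≤ (replGraph G1 x1 v1 v2 x2).indepNum := by
  classical
  obtain ⟨S, hS, hcard⟩ := G1.exists_isNIndepSet_indepNum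
  have hS' := isIndepSet_finset_iff.mp hS
  have hS_erase (v : U) : G1.IsIndepSet (S.erase v) := hS.mono (coe_subset.mpr (S.erase_subset v))
  rw [← hcard]
  by_cases hv1 : v1 ∈ S
  · have hx1 : x1 ∉ S := fun hx1 => hS' v1 hv1 x1 hx1 (h.adj_left_iff.mpr (.inl rfl))
    have hv2 : v2 ∉ S := fun hv2 => hS' v1 hv1 v2 hv2 (h.adj_left_iff.mpr (.inr rfl))
    have := card_add_card_le_indepNum_replGraph (t := {0, 2}) (x2 := x2) (hS_erase v1)
      (notMem_erase v1 S) (fun hv => hv2 (mem_of_mem_erase hv)) (by decide)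
      (fun hx => absurd (mem_of_mem_erase hx) hx1) (fun _ => by decide)
    have hpos := card_pos.mpr ⟨v1, hv1⟩
    rw [card_erase_of_mem hv1, show #({0, 2} : Finset (Fin 5)) = 2 from rfl] at this
    omega
  by_cases hv2 : v2 ∈ S
  · have hx2 : x2 ∉ S := fun hx2 => hS' v2 hv2 x2 hx2 (h.adj_right_iff.mpr (.inr rfl))
    have := card_add_card_le_indepNum_replGraph (t := {1, 4}) (x1 := x1) (hS_erase v2)
      (fun hv => hv1 (mem_of_mem_erase hv)) (notMem_erase v2 S) (by decide)
      (fun _ => by decide) (fun hx => absurd (mem_of_mem_erase hx) hx2)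
    have hpos := card_pos.mpr ⟨v2, hv2⟩
    rw [card_erase_of_mem hv2, show #({1, 4} : Finset (Fin 5)) = 2 from rfl] at this
    omega
  exact card_add_card_le_indepNum_replGraph (t := {1}) hS hv1 hv2 (by decide)
    (fun _ => by decide) (fun _ => by decide)

lemma IsReplacablePath.indepNum_replGraph_le [Finite U] (h : IsReplacablePath G1 x1 v1 v2 x2) :
    (replGraph G1 x1 v1 v2 x2).indepNum ≤ G1.indepNum + 1 := by
  classical
  refine indepNum_le_of_forall fun T hT => ?_
  rw [← toLeft_disjSum_toRight (u := T), isIndepSet_replGraph_disjSum] at hT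
  obtain ⟨hS, ht, hcross⟩ := hT
  set S := T.toLeft.map (Function.Embedding.subtype _)
  have hcard : #T = #S + #T.toRight := by rw [card_map, card_toLeft_add_card_toRight]
  have hv1 : v1 ∉ S := fun hv => by obtain ⟨a, -, ha⟩ := mem_map.mp hv; exact a.2.1 ha
  have hv2 : v2 ∉ S := fun hv => by obtain ⟨a, -, ha⟩ := mem_map.mp hv; exact a.2.2 ha
  have ht2 : #T.toRight ≤ 2 := indepNum_cycleGraph_five ▸ ht.card_le_indepNum
  have hSα := hS.card_le_indepNum
  rcases Nat.lt_or_ge #T.toRight 2 with ht1 | ht2'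
  · omega
  have hx : x1 ∉ S ∨ x2 ∉ S := by
    by_contra! ⟨hx1, hx2⟩
    obtain ⟨a, ha, rfl⟩ := mem_map.mp hx1
    obtain ⟨b, hb, rfl⟩ := mem_map.mp hx2
    -- only `z1, z2` are non-adjacent to both `x1` and `x2`, and they are adjacent
    have hz : ∀ t : Finset (Fin 5), (cycleGraph 5).IsIndepSet t →
        (∀ i ∈ t, i ≠ 0 ∧ i ≠ 3 ∧ i ≠ 4) → #t ≤ 1 := by
      simp only [isIndepSet_finset_iff]
      decide
    have := hz _ ht fun i hi => ⟨fun h0 => hcross a ha i hi (.inl ⟨rfl, .inl h0⟩),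
      fun h3 => hcross a ha i hi (.inl ⟨rfl, .inr h3⟩), fun h4 => hcross b hb i hi (.inr ⟨rfl, h4⟩)⟩
    omega
  obtain ⟨v, hv, hins⟩ := h.exists_isIndepSet_insert hS hv1 hv2 hx
  have := hins.card_le_indepNum
  rw [card_insert_of_notMem hv] at this
  omega

lemma IsReplacablePath.indepNum_replGraph [Finite U] (h : IsReplacablePath G1 x1 v1 v2 x2) :
    (replGraph G1 x1 v1 v2 x2).indepNum = G1.indepNum + 1 :=
  le_antisymm h.indepNum_replGraph_le h.le_indepNum_replGraph

lemma card_replGraph_vertex [Finite U] (h12 : v1 ≠ v2) :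
    Nat.card ({u : U // u ≠ v1 ∧ u ≠ v2} ⊕ Fin 5) = Nat.card U + 3 := by
  have hpair := Set.ncard_add_ncard_compl ({v1, v2} : Set U)
  rw [Set.ncard_pair h12] at hpair
  have hcompl : Nat.card {u : U // u ≠ v1 ∧ u ≠ v2} = ({v1, v2}ᶜ : Set U).ncard := by
    rw [← Nat.card_coe_set_eq]
    exact Nat.card_congr (Equiv.subtypeEquivRight (by simp))
  rw [Nat.card_sum, Nat.card_fin]
  omega

end PathDiamond

end SimpleGraph

lemma InClassG.finite {V : Type} {G : SimpleGraph V} (hG : InClassG G) : Finite V := by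
  induction hG with
  | p2 G e | c5 G e | repl G1 G x1 v1 v2 x2 _ _ e => exact .of_equiv _ e.some.toEquiv.symm

theorem stmt9_general {V : Type} (G : SimpleGraph V) (hG : InClassG G) :
    3 * alphaNum G = Nat.card V + 1 ∧ Nat.card V % 3 = 2 := by
  rw [alphaNum_eq_indepNum]
  induction hG with
  | p2 G e =>
    obtain ⟨e⟩ := e
    rw [e.indepNum_eq, indepNum_pathGraph_two, Nat.card_congr e.toEquiv]
    simp
  | c5 G e =>
    obtain ⟨e⟩ := e
    rw [e.indepNum_eq, indepNum_cycleGraph_five, Nat.card_congr e.toEquiv]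
    simp
  | repl G1 G x1 v1 v2 x2 hG1 h e ih =>
    obtain ⟨e⟩ := e
    have := hG1.finite
    rw [e.indepNum_eq, h.indepNum_replGraph, Nat.card_congr e.toEquiv, card_replGraph_vertex h.ne]
    omega

/-- Every `n`-vertex graph in the class 𝒢 satisfies `α(G) = (n+1)/3`;
in particular `n ≡ 2 (mod 3)`. -/
theorem stmt9 {V : Type} [Finite V] (G : SimpleGraph V) (hG : InClassG G) :
    3 * alphaNum G = Nat.card V + 1 ∧ Nat.card V % 3 = 2 :=
  stmt9_general G hG
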